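/- arXiv:2208.07272 — 6 statements merged into one kernel-verified Lean document; each statement's English description precedes it below -/
import Mathlib

section
/- Let p ≥ 1 and r > 0 be real numbers, and let a, b be real numbers with a + b ≥ 0. Then |r + a|^p + |r + b|^p ≥ 2·r^p. -/
/-- Scalar inequality: for `p ≥ 1`, `r > 0` and reals `a, b` with `a + b ≥ 0`,
`|r + a|^p + |r + b|^p ≥ 2 · r^p`. -/
theorem scalar_edge_ball_ineq (p r a b : ℝ) (hp : 1 ≤ p) (hr : 0 < r)
    (hab : 0 ≤ a + b) :
    2 * r ^ p ≤ |r + a| ^ p + |r + b| ^ p := by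
  set x := |r + a| with hxdef
  set y := |r + b| with hydef
  have hx : (0:ℝ) ≤ x := abs_nonneg _
  have hy : (0:ℝ) ≤ y := abs_nonneg _
  have hxy : 2 * r ≤ x + y := by
    have h1 : r + a ≤ x := le_abs_self _
    have h2 : r + b ≤ y := le_abs_self _
    linarith
  have h1 : r ^ p ≤ ((x + y) / 2) ^ p :=
    Real.rpow_le_rpow hr.le (by linarith) (by linarith)
  have h2 : ((x + y) / 2) ^ p ≤ (x ^ p + y ^ p) / 2 := by
    have hc := (convexOn_rpow hp).2 (Set.mem_Ici.2 hx) (Set.mem_Ici.2 hy)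
      (by norm_num : (0:ℝ) ≤ 1/2) (by norm_num : (0:ℝ) ≤ 1/2) (by norm_num)
    have e1 : (1/2 : ℝ) • x + (1/2 : ℝ) • y = (x + y) / 2 := by
      simp [smul_eq_mul]; ring
    rw [e1] at hc
    simp only [smul_eq_mul] at hc; linarith
  linarith
end

section
/- Let U be a finite set, let w : U → ℝ be a nonnegative weight function, let 𝒮 be a nonempty finite family of subsets of U, let b ≥ 1 be a natural number, and let β ∈ (0, 1]. Suppose S_1, …, S_b ∈ 𝒮 satisfy, for each i ∈ {1,…,b}, the β-greedy condition w(S_i \ T_{i−1}) ≥ β · max_{S ∈ 𝒮} w(S \ T_{i−1}), where T_0 = ∅, T_i = S_1 ∪ ⋯ ∪ S_i, and w(A) denotes Σ_{x ∈ A} w(x). Then w(T_b) ≥ (1 − e^{−β}) · max{ w(R_1 ∪ ⋯ ∪ R_b) : R_1, …, R_b ∈ 𝒮 }. -/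
lemma sum_biUnion_le_aux {α ι : Type*} [DecidableEq α] (w : α → ℝ) (hw : ∀ x, 0 ≤ w x)
    (s : Finset ι) (t : ι → Finset α) :
    ∑ x ∈ s.biUnion t, w x ≤ ∑ i ∈ s, ∑ x ∈ t i, w x := by
  classical
  induction s using Finset.induction with
  | empty => simp
  | @insert a s hx ih =>
    rw [Finset.biUnion_insert, Finset.sum_insert hx]
    calc ∑ x ∈ t a ∪ s.biUnion t, w x
        ≤ ∑ x ∈ t a, w x + ∑ x ∈ s.biUnion t, w x := by
          rw [← Finset.sum_union_inter]
          have : 0 ≤ ∑ x ∈ t a ∩ s.biUnion t, w x := Finset.sum_nonneg fun x _ => hw x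
          linarith
      _ ≤ ∑ x ∈ t a, w x + ∑ i ∈ s, ∑ x ∈ t i, w x := by linarith

/-- Hochbaum–Pathria analysis of β-greedy for maximum `b`-coverage: if each of
`b` greedily chosen sets `S 0, …, S (b-1) ∈ 𝒮` covers (in weight) at least a
`β`-fraction of the best possible new weight, then the union of the chosen
sets covers at least a `(1 − e^{−β})`-fraction of the weight covered by any
`b` sets from `𝒮`. -/
theorem greedy_max_coverage_bound {α : Type*} [Fintype α] [DecidableEq α]
    (w : α → ℝ) (hw : ∀ x, 0 ≤ w x)
    (𝒮 : Finset (Finset α)) (h𝒮 : 𝒮.Nonempty)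
    (b : ℕ) (hb : 1 ≤ b) (β : ℝ) (hβ0 : 0 < β) (hβ1 : β ≤ 1)
    (S : ℕ → Finset α) (hS : ∀ i < b, S i ∈ 𝒮)
    (hgreedy : ∀ i < b, ∀ A ∈ 𝒮,
      β * ∑ x ∈ A \ (Finset.range i).biUnion S, w x
        ≤ ∑ x ∈ S i \ (Finset.range i).biUnion S, w x) :
    ∀ R : ℕ → Finset α, (∀ i < b, R i ∈ 𝒮) →
      (1 - Real.exp (-β)) * ∑ x ∈ (Finset.range b).biUnion R, w x
        ≤ ∑ x ∈ (Finset.range b).biUnion S, w x := by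
  intro R hR
  set T : ℕ → Finset α := fun i => (Finset.range i).biUnion S with hT
  set f : ℕ → ℝ := fun i => ∑ x ∈ T i, w x with hf
  set OPT : ℝ := ∑ x ∈ (Finset.range b).biUnion R, w x with hOPT
  have hb0 : (0:ℝ) < b := by exact_mod_cast hb
  have hOPTnn : 0 ≤ OPT := Finset.sum_nonneg fun x _ => hw x
  -- f (i+1) = f i + gain i
  have hfsucc : ∀ i, f (i+1) = f i + ∑ x ∈ S i \ T i, w x := by
    intro i
    have : T (i+1) = T i ∪ S i := by
      simp [hT, Finset.range_add_one, Finset.biUnion_insert, Finset.union_comm]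
    rw [hf]
    simp only [this]
    rw [show T i ∪ S i = T i ∪ (S i \ T i) from (Finset.union_sdiff_self_eq_union).symm]
    rw [Finset.sum_union Finset.disjoint_sdiff]
  -- OPT - f i ≤ w(∪R \ T i)
  have hrem : ∀ i, OPT - f i ≤ ∑ x ∈ (Finset.range b).biUnion R \ T i, w x := by
    intro i
    have h1 : OPT ≤ ∑ x ∈ T i ∪ ((Finset.range b).biUnion R \ T i), w x := by
      apply Finset.sum_le_sum_of_subset_of_nonneg
      · intro x hx
        by_cases h : x ∈ T i
        · exact Finset.mem_union_left _ h
        · exact Finset.mem_union_right _ (Finset.mem_sdiff.mpr ⟨hx, h⟩)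
      · intro x _ _; exact hw x
    rw [Finset.sum_union Finset.disjoint_sdiff] at h1
    simp only [hf] at *
    linarith
  -- step inequality
  have hstep : ∀ i < b, OPT - f (i+1) ≤ (1 - β / b) * (OPT - f i) := by
    intro i hi
    have hgain : β / b * (OPT - f i) ≤ ∑ x ∈ S i \ T i, w x := by
      have h2 : ∑ x ∈ (Finset.range b).biUnion R \ T i, w x
          ≤ ∑ j ∈ Finset.range b, ∑ x ∈ R j \ T i, w x := by
        calc ∑ x ∈ (Finset.range b).biUnion R \ T i, w x
            ≤ ∑ x ∈ (Finset.range b).biUnion (fun j => R j \ T i), w x := by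
              apply Finset.sum_le_sum_of_subset_of_nonneg
              · intro x hx
                rw [Finset.mem_sdiff, Finset.mem_biUnion] at hx
                obtain ⟨⟨j, hj, hxj⟩, hxT⟩ := hx
                exact Finset.mem_biUnion.mpr ⟨j, hj, Finset.mem_sdiff.mpr ⟨hxj, hxT⟩⟩
              · intro x _ _; exact hw x
          _ ≤ _ := sum_biUnion_le_aux w hw _ _
      have h3 : ∀ j ∈ Finset.range b, β * ∑ x ∈ R j \ T i, w x ≤ ∑ x ∈ S i \ T i, w x := by
        intro j hj
        exact hgreedy i hi (R j) (hR j (Finset.mem_range.mp hj))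
      have h4 : β * ∑ j ∈ Finset.range b, ∑ x ∈ R j \ T i, w x
          ≤ b * ∑ x ∈ S i \ T i, w x := by
        rw [Finset.mul_sum]
        calc ∑ j ∈ Finset.range b, β * ∑ x ∈ R j \ T i, w x
            ≤ ∑ j ∈ Finset.range b, ∑ x ∈ S i \ T i, w x := Finset.sum_le_sum h3
          _ = b * ∑ x ∈ S i \ T i, w x := by
              rw [Finset.sum_const, Finset.card_range, nsmul_eq_mul]
      have h5 : β * (OPT - f i) ≤ b * ∑ x ∈ S i \ T i, w x := by
        have := hrem i
        nlinarith
      rw [div_mul_eq_mul_div, div_le_iff₀ hb0]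
      linarith [h5]
    have := hfsucc i
    nlinarith
  -- induction: OPT - f i ≤ (1 - β/b)^i * OPT
  have hbase : f 0 = 0 := by simp [hf, hT]
  have hcoef : 0 ≤ 1 - β / b := by
    have : β / b ≤ 1 := by
      rw [div_le_one hb0]
      calc β ≤ 1 := hβ1
        _ ≤ b := by exact_mod_cast hb
    linarith
  have hind : ∀ i ≤ b, OPT - f i ≤ (1 - β / b)^i * OPT := by
    intro i
    induction i with
    | zero => intro _; simp [hbase]
    | succ n ih =>
      intro hn
      have hnb : n < b := hn
      have h1 := hstep n hnb
      have h2 := ih (le_of_lt hnb)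
      calc OPT - f (n+1) ≤ (1 - β / b) * (OPT - f n) := h1
        _ ≤ (1 - β / b) * ((1 - β / b)^n * OPT) := by
            exact mul_le_mul_of_nonneg_left h2 hcoef
        _ = (1 - β / b)^(n+1) * OPT := by ring
  have hfinal := hind b le_rfl
  -- (1 - β/b)^b ≤ exp(-β)
  have hexp : (1 - β / b)^b ≤ Real.exp (-β) := by
    have h1 : 1 - β / b ≤ Real.exp (-(β / b)) := by
      linarith [Real.add_one_le_exp (-(β / b))]
    calc (1 - β / b)^b ≤ (Real.exp (-(β / b)))^b :=
          pow_le_pow_left₀ hcoef h1 b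
      _ = Real.exp (-(β / b) * b) := by rw [← Real.exp_nat_mul]; ring_nf
      _ = Real.exp (-β) := by
          congr 1
          field_simp
  have : (1 - β / b)^b * OPT ≤ Real.exp (-β) * OPT :=
    mul_le_mul_of_nonneg_right hexp hOPTnn
  have hfb : f b = ∑ x ∈ (Finset.range b).biUnion S, w x := rfl
  rw [← hfb]
  nlinarith
end

section
/- Let U be a finite set, let w : U → ℝ be a nonnegative weight function, let 𝒮 be a nonempty finite family of subsets of U, let b ≥ 1 and k' ≥ 1 be natural numbers, let b' = ⌈b/k'⌉, and let β ∈ (0, 1]. Suppose S_1, …, S_{b'} ∈ 𝒮 satisfy, for each i ∈ {1,…,b'}, the β-greedy condition w(S_i \ T_{i−1}) ≥ β · max_{S ∈ 𝒮} w(S \ T_{i−1}), where T_0 = ∅, T_i = S_1 ∪ ⋯ ∪ S_i, and w(A) = Σ_{x ∈ A} w(x). Then w(T_{b'}) ≥ (1/k')·(1 − e^{−β}) · max{ w(R_1 ∪ ⋯ ∪ R_b) : R_1, …, R_b ∈ 𝒮 }. -/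
private lemma one_sub_pow_le_nat (t : ℝ) (h0 : 0 ≤ t) (h1 : t ≤ 1) :
    ∀ n : ℕ, 1 - t ^ n ≤ n * (1 - t) := by
  intro n
  induction n with
  | zero => simp
  | succ n ih =>
      have htn : t ^ n ≤ 1 := pow_le_one₀ h0 h1
      have htn0 : 0 ≤ t ^ n := pow_nonneg h0 n
      push_cast
      have : t ^ (n + 1) = t * t ^ n := by ring
      nlinarith

private lemma sum_biUnion_le_sum {α : Type*} [DecidableEq α] (w : α → ℝ)
    (hw : ∀ x, 0 ≤ w x) (s : Finset ℕ) (g : ℕ → Finset α) :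
    ∑ x ∈ s.biUnion g, w x ≤ ∑ i ∈ s, ∑ x ∈ g i, w x := by
  induction s using Finset.induction_on with
  | empty => simp
  | @insert a s hi ih =>
      rw [Finset.biUnion_insert, Finset.sum_insert hi]
      have h1 : ∑ x ∈ g a ∪ s.biUnion g, w x ≤ ∑ x ∈ g a, w x + ∑ x ∈ s.biUnion g, w x := by
        have := Finset.sum_union_inter (s₁ := g a) (s₂ := s.biUnion g) (f := w)
        have hnn : 0 ≤ ∑ x ∈ g a ∩ s.biUnion g, w x :=
          Finset.sum_nonneg fun x _ => hw x
        linarith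
      linarith

/-- Approximation guarantee for the paper's greedy attack: β-greedy selection of
`b' = ⌈b / k'⌉` sets from `𝒮` covers at least a `(1/k')·(1 − e^{−β})`-fraction
of the maximum weight coverable by `b` sets from `𝒮`. -/
theorem greedy_attack_bound {α : Type*} [Fintype α] [DecidableEq α]
    (w : α → ℝ) (hw : ∀ x, 0 ≤ w x)
    (𝒮 : Finset (Finset α)) (h𝒮 : 𝒮.Nonempty)
    (b k' : ℕ) (hb : 1 ≤ b) (hk' : 1 ≤ k')
    (b' : ℕ) (hb' : b' = (b + k' - 1) / k')
    (β : ℝ) (hβ0 : 0 < β) (hβ1 : β ≤ 1)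
    (S : ℕ → Finset α) (hS : ∀ i < b', S i ∈ 𝒮)
    (hgreedy : ∀ i < b', ∀ A ∈ 𝒮,
      β * ∑ x ∈ A \ (Finset.range i).biUnion S, w x
        ≤ ∑ x ∈ S i \ (Finset.range i).biUnion S, w x) :
    ∀ R : ℕ → Finset α, (∀ i < b, R i ∈ 𝒮) →
      (1 / (k' : ℝ)) * (1 - Real.exp (-β)) * ∑ x ∈ (Finset.range b).biUnion R, w x
        ≤ ∑ x ∈ (Finset.range b').biUnion S, w x := by
  intro R hR
  set f : Finset α → ℝ := fun A => ∑ x ∈ A, w x with hf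
  set T : ℕ → Finset α := fun j => (Finset.range j).biUnion S with hT
  set OPT : ℝ := ∑ x ∈ (Finset.range b).biUnion R, w x with hOPT
  have hOPT0 : 0 ≤ OPT := Finset.sum_nonneg fun x _ => hw x
  have hbR : (1 : ℝ) ≤ (b : ℝ) := by exact_mod_cast hb
  have hbpos : (0 : ℝ) < b := lt_of_lt_of_le one_pos hbR
  have hkR : (1 : ℝ) ≤ (k' : ℝ) := by exact_mod_cast hk'
  have hkpos : (0 : ℝ) < k' := lt_of_lt_of_le one_pos hkR
  -- monotonicity of f
  have hfmono : ∀ {A B : Finset α}, A ⊆ B → f A ≤ f B := fun hAB =>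
    Finset.sum_le_sum_of_subset_of_nonneg hAB (fun x _ _ => hw x)
  -- step decomposition: f (T (j+1)) = f (T j) + f (S j \ T j)
  have hstep : ∀ j, f (T (j + 1)) = f (T j) + f (S j \ T j) := by
    intro j
    have h1 : T (j + 1) = T j ∪ (S j \ T j) := by
      simp only [hT, Finset.range_add_one, Finset.biUnion_insert]
      ext x
      simp only [Finset.mem_union, Finset.mem_sdiff]
      tauto
    rw [h1, hf]
    exact Finset.sum_union (Finset.disjoint_sdiff)
  have honemβb : (0:ℝ) ≤ 1 - β / b := by
    have : β / b ≤ 1 := by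
      rw [div_le_one hbpos]; linarith
    linarith
  -- gap recursion
  have hgap : ∀ j ≤ b', OPT - f (T j) ≤ (1 - β / b) ^ j * OPT := by
    intro j hj
    induction j with
    | zero => simp [hT, hf]
    | succ j ih =>
        have hjb : j < b' := lt_of_lt_of_le (Nat.lt_succ_self j) hj
        have ih' := ih (le_of_lt hjb)
        -- OPT ≤ f (T j) + b * (f (S j \ T j) / β)
        have hcov : OPT ≤ f (T j) + (b : ℝ) * (f (S j \ T j) / β) := by
          have hsub : (Finset.range b).biUnion R ⊆
              T j ∪ (Finset.range b).biUnion (fun i => R i \ T j) := by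
            intro x hx
            simp only [Finset.mem_biUnion, Finset.mem_range] at hx
            obtain ⟨i, hi, hxi⟩ := hx
            by_cases hxT : x ∈ T j
            · exact Finset.mem_union_left _ hxT
            · refine Finset.mem_union_right _ ?_
              simp only [Finset.mem_biUnion, Finset.mem_range, Finset.mem_sdiff]
              exact ⟨i, hi, hxi, hxT⟩
          have h1 : OPT ≤ f (T j ∪ (Finset.range b).biUnion (fun i => R i \ T j)) :=
            hfmono hsub
          have h2 : f (T j ∪ (Finset.range b).biUnion (fun i => R i \ T j)) ≤
              f (T j) + ∑ i ∈ Finset.range b, f (R i \ T j) := by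
            have hun : f (T j ∪ (Finset.range b).biUnion (fun i => R i \ T j)) ≤
                f (T j) + f ((Finset.range b).biUnion (fun i => R i \ T j)) := by
              have := Finset.sum_union_inter (s₁ := T j)
                (s₂ := (Finset.range b).biUnion (fun i => R i \ T j)) (f := w)
              have hnn : 0 ≤ ∑ x ∈ T j ∩ (Finset.range b).biUnion (fun i => R i \ T j), w x :=
                Finset.sum_nonneg fun x _ => hw x
              simp only [hf]; linarith
            have hbu := sum_biUnion_le_sum w hw (Finset.range b) (fun i => R i \ T j)
            simp only [hf] at hbu ⊢
            linarith
          have h3 : ∑ i ∈ Finset.range b, f (R i \ T j) ≤ (b : ℝ) * (f (S j \ T j) / β) := by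
            have hterm : ∀ i ∈ Finset.range b, f (R i \ T j) ≤ f (S j \ T j) / β := by
              intro i hi
              rw [Finset.mem_range] at hi
              have := hgreedy j hjb (R i) (hR i hi)
              rw [le_div_iff₀ hβ0]
              simp only [hf, hT]
              linarith [this]
            calc ∑ i ∈ Finset.range b, f (R i \ T j)
                ≤ ∑ _i ∈ Finset.range b, f (S j \ T j) / β :=
                  Finset.sum_le_sum hterm
              _ = (b : ℝ) * (f (S j \ T j) / β) := by
                  rw [Finset.sum_const, Finset.card_range, nsmul_eq_mul]
          linarith
        -- from hcov : β/b * (OPT - f (T j)) ≤ f (S j \ T j)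
        have hd : β / b * (OPT - f (T j)) ≤ f (S j \ T j) := by
          rw [div_mul_eq_mul_div, div_le_iff₀ hbpos]
          have : β * (OPT - f (T j)) ≤ β * ((b:ℝ) * (f (S j \ T j) / β)) := by
            have := mul_le_mul_of_nonneg_left (sub_le_iff_le_add'.mpr hcov) (le_of_lt hβ0)
            linarith [this]
          have hβne : β ≠ 0 := ne_of_gt hβ0
          calc β * (OPT - f (T j)) ≤ β * ((b:ℝ) * (f (S j \ T j) / β)) := this
            _ = f (S j \ T j) * b := by field_simp
        have hrec : OPT - f (T (j + 1)) ≤ (1 - β / b) * (OPT - f (T j)) := by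
          rw [hstep j]; nlinarith [hd]
        calc OPT - f (T (j + 1)) ≤ (1 - β / b) * (OPT - f (T j)) := hrec
          _ ≤ (1 - β / b) * ((1 - β / b) ^ j * OPT) :=
              mul_le_mul_of_nonneg_left ih' honemβb
          _ = (1 - β / b) ^ (j + 1) * OPT := by ring
  have hmain := hgap b' le_rfl
  -- (1 - β/b)^{b'} ≤ exp (-(β/k'))
  have hbk : b ≤ b' * k' := by
    rw [hb', mul_comm]
    have hmod := Nat.div_add_mod (b + k' - 1) k'
    have hlt : (b + k' - 1) % k' < k' := Nat.mod_lt _ hk'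
    set q := (b + k' - 1) / k' with hq
    set r := (b + k' - 1) % k' with hr
    set m := k' * q with hm
    omega
  have hpow : (1 - β / b) ^ b' ≤ Real.exp (-(β / k')) := by
    have h1 : (1 - β / b) ^ b' ≤ Real.exp (-(β / b)) ^ b' := by
      apply pow_le_pow_left₀ honemβb
      linarith [Real.add_one_le_exp (-(β / b))]
    have h2 : Real.exp (-(β / b)) ^ b' = Real.exp ((b' : ℝ) * (-(β / b))) := by
      rw [Real.exp_nat_mul]
    rw [h2] at h1
    refine h1.trans (Real.exp_le_exp.mpr ?_)
    have hbk' : (b : ℝ) ≤ (b' : ℝ) * k' := by exact_mod_cast hbk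
    have : β / k' ≤ (b' : ℝ) * β / b := by
      rw [div_le_div_iff₀ hkpos hbpos]
      nlinarith
    have heq : (b' : ℝ) * -(β / b) = -((b' : ℝ) * β / b) := by ring
    linarith [this, heq.le]
  set t : ℝ := Real.exp (-(β / k')) with hteq
  have ht0 : 0 ≤ t := Real.exp_nonneg _
  have ht1 : t ≤ 1 := by
    rw [hteq, Real.exp_le_one_iff]
    have : 0 ≤ β / k' := by positivity
    linarith
  have htpow : t ^ k' = Real.exp (-β) := by
    rw [hteq, ← Real.exp_nat_mul]
    have hkne : (k' : ℝ) ≠ 0 := ne_of_gt hkpos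
    congr 1
    field_simp
  have hA := one_sub_pow_le_nat t ht0 ht1 k'
  rw [htpow] at hA
  have hfrac : (1 / (k' : ℝ)) * (1 - Real.exp (-β)) ≤ 1 - t := by
    rw [one_div, inv_mul_le_iff₀ hkpos]
    linarith
  have h5 : (1 - β / b) ^ b' * OPT ≤ t * OPT :=
    mul_le_mul_of_nonneg_right hpow hOPT0
  show (1 / (k' : ℝ)) * (1 - Real.exp (-β)) * OPT ≤ f (T b')
  have h6 : (1 - t) * OPT ≤ f (T b') := by linarith
  calc (1 / (k' : ℝ)) * (1 - Real.exp (-β)) * OPT ≤ (1 - t) * OPT :=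
        mul_le_mul_of_nonneg_right hfrac hOPT0
    _ ≤ f (T b') := h6
end

section
/- Let U be a finite set, let w : U → ℝ be a nonnegative weight function, let 𝒮 be a nonempty finite family of subsets of U, let b ≥ 1 and k' ≥ 1 be natural numbers, and let b' = ⌈b/k'⌉. Suppose S_1, …, S_{b'} ∈ 𝒮 satisfy, for each i ∈ {1,…,b'}, the exact greedy condition w(S_i \ T_{i−1}) = max_{S ∈ 𝒮} w(S \ T_{i−1}), where T_0 = ∅, T_i = S_1 ∪ ⋯ ∪ S_i, and w(A) = Σ_{x ∈ A} w(x). Then w(T_{b'}) ≥ (1/k')·(1 − 1/e) · max{ w(R_1 ∪ ⋯ ∪ R_b) : R_1, …, R_b ∈ 𝒮 }. -/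
lemma sum_biUnion_le_sum_sum {ι α : Type*} [DecidableEq α] (s : Finset ι)
    (t : ι → Finset α) (w : α → ℝ) (hw : ∀ x, 0 ≤ w x) :
    ∑ x ∈ s.biUnion t, w x ≤ ∑ i ∈ s, ∑ x ∈ t i, w x := by
  classical
  refine Finset.induction_on s (by simp) ?_
  intro a s ha ih
  rw [Finset.biUnion_insert, Finset.sum_insert ha]
  have h1 : ∑ x ∈ t a ∪ s.biUnion t, w x
      ≤ ∑ x ∈ t a, w x + ∑ x ∈ s.biUnion t, w x := by
    rw [← Finset.sum_union_inter]
    have : 0 ≤ ∑ x ∈ t a ∩ s.biUnion t, w x :=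
      Finset.sum_nonneg fun x _ => hw x
    linarith
  linarith

/-- The `β = 1` case of the greedy approximation guarantee: exact greedy
selection of `b' = ⌈b / k'⌉` sets from `𝒮` (each chosen set covering the
maximum possible new weight) covers at least a `(1/k')·(1 − 1/e)`-fraction of
the maximum weight coverable by `b` sets from `𝒮`. -/
theorem exact_greedy_attack_bound {α : Type*} [Fintype α] [DecidableEq α]
    (w : α → ℝ) (hw : ∀ x, 0 ≤ w x)
    (𝒮 : Finset (Finset α)) (h𝒮 : 𝒮.Nonempty)
    (b k' : ℕ) (hb : 1 ≤ b) (hk' : 1 ≤ k')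
    (b' : ℕ) (hb' : b' = (b + k' - 1) / k')
    (S : ℕ → Finset α) (hS : ∀ i < b', S i ∈ 𝒮)
    (hgreedy : ∀ i < b', ∀ A ∈ 𝒮,
      ∑ x ∈ A \ (Finset.range i).biUnion S, w x
        ≤ ∑ x ∈ S i \ (Finset.range i).biUnion S, w x) :
    ∀ R : ℕ → Finset α, (∀ i < b, R i ∈ 𝒮) →
      (1 / (k' : ℝ)) * (1 - 1 / Real.exp 1) * ∑ x ∈ (Finset.range b).biUnion R, w x
        ≤ ∑ x ∈ (Finset.range b').biUnion S, w x := by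
  intro R hR
  set T : ℕ → Finset α := fun i => (Finset.range i).biUnion S with hT
  set g : ℕ → ℝ := fun i => ∑ x ∈ T i, w x with hg
  set OPT : ℝ := ∑ x ∈ (Finset.range b).biUnion R, w x with hOPT
  have hOPT0 : 0 ≤ OPT := Finset.sum_nonneg fun x _ => hw x
  have hb0 : (0:ℝ) < b := by exact_mod_cast hb
  have hk0 : (0:ℝ) < k' := by exact_mod_cast hk'
  -- key per-step inequality
  have hstep : ∀ i < b', OPT - g i ≤ (b : ℝ) * (g (i+1) - g i) := by
    intro i hi
    have hTi : T (i+1) = T i ∪ (S i \ T i) := by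
      simp only [hT, Finset.range_add_one, Finset.biUnion_insert]
      rw [Finset.union_sdiff_self_eq_union]
      exact Finset.union_comm _ _
    have hgain : g (i+1) - g i = ∑ x ∈ S i \ T i, w x := by
      rw [hg]
      simp only
      rw [hTi, Finset.sum_union Finset.disjoint_sdiff]
      ring
    rw [hgain]
    have h1 : OPT ≤ g i + ∑ x ∈ (Finset.range b).biUnion R \ T i, w x := by
      have hsub : (Finset.range b).biUnion R ⊆ T i ∪ ((Finset.range b).biUnion R \ T i) := by
        intro x hx
        by_cases h : x ∈ T i
        · exact Finset.mem_union_left _ h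
        · exact Finset.mem_union_right _ (Finset.mem_sdiff.mpr ⟨hx, h⟩)
      calc OPT ≤ ∑ x ∈ T i ∪ ((Finset.range b).biUnion R \ T i), w x :=
            Finset.sum_le_sum_of_subset_of_nonneg hsub (fun x _ _ => hw x)
        _ = g i + ∑ x ∈ (Finset.range b).biUnion R \ T i, w x := by
            rw [Finset.sum_union Finset.disjoint_sdiff]
    have h2 : ∑ x ∈ (Finset.range b).biUnion R \ T i, w x
        ≤ (b : ℝ) * ∑ x ∈ S i \ T i, w x := by
      have heq : (Finset.range b).biUnion R \ T i
          = (Finset.range b).biUnion (fun j => R j \ T i) := by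
        ext x
        simp only [Finset.mem_sdiff, Finset.mem_biUnion]
        tauto
      rw [heq]
      calc ∑ x ∈ (Finset.range b).biUnion (fun j => R j \ T i), w x
          ≤ ∑ j ∈ Finset.range b, ∑ x ∈ R j \ T i, w x :=
            sum_biUnion_le_sum_sum _ _ _ hw
        _ ≤ ∑ j ∈ Finset.range b, ∑ x ∈ S i \ T i, w x := by
            refine Finset.sum_le_sum fun j hj => ?_
            exact hgreedy i hi (R j) (hR j (Finset.mem_range.mp hj))
        _ = (b : ℝ) * ∑ x ∈ S i \ T i, w x := by
            rw [Finset.sum_const, Finset.card_range, nsmul_eq_mul]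
    have h3 : 0 ≤ g i := Finset.sum_nonneg fun x _ => hw x
    linarith
  -- induction bound
  have hind : ∀ i ≤ b', OPT - g i ≤ OPT * (1 - 1/(b:ℝ))^i := by
    intro i
    induction i with
    | zero =>
      intro _
      have : g 0 = 0 := by simp [hg, hT]
      simp [this]
    | succ i ih =>
      intro hi1
      have hi : i < b' := Nat.lt_of_succ_le hi1
      have hq : (0:ℝ) ≤ 1 - 1/(b:ℝ) := by
        have : 1/(b:ℝ) ≤ 1 := by
          rw [div_le_one hb0]; exact_mod_cast hb
        linarith
      have h1 : OPT - g (i+1) ≤ (OPT - g i) * (1 - 1/(b:ℝ)) := by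
        have hh : (b:ℝ) * (OPT - g (i+1)) ≤ (b:ℝ) * ((OPT - g i) * (1 - 1/(b:ℝ))) := by
          have heq : (b:ℝ) * ((OPT - g i) * (1 - 1/(b:ℝ)))
              = (OPT - g i) * ((b:ℝ) - 1) := by
            field_simp
          rw [heq]
          nlinarith [hstep i hi]
        exact le_of_mul_le_mul_left hh hb0
      calc OPT - g (i+1) ≤ (OPT - g i) * (1 - 1/(b:ℝ)) := h1
        _ ≤ (OPT * (1 - 1/(b:ℝ))^i) * (1 - 1/(b:ℝ)) :=
            mul_le_mul_of_nonneg_right (ih (le_of_lt hi)) hq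
        _ = OPT * (1 - 1/(b:ℝ))^(i+1) := by ring
  have hfinal := hind b' le_rfl
  have hq : (0:ℝ) ≤ 1 - 1/(b:ℝ) := by
    have : 1/(b:ℝ) ≤ 1 := by rw [div_le_one hb0]; exact_mod_cast hb
    linarith
  have hexp1 : (1 - 1/(b:ℝ))^b' ≤ Real.exp (-(1/(b:ℝ)))^b' := by
    apply pow_le_pow_left₀ hq
    have := Real.add_one_le_exp (-(1/(b:ℝ)))
    linarith
  have hexp2 : Real.exp (-(1/(b:ℝ)))^b' = Real.exp (-((b':ℝ)/(b:ℝ))) := by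
    rw [← Real.exp_nat_mul]
    congr 1
    ring
  have hbk : (b : ℝ) ≤ (k' : ℝ) * (b' : ℝ) := by
    have h := Nat.lt_mul_div_succ (b + k' - 1) (Nat.lt_of_lt_of_le Nat.zero_lt_one hk')
    rw [← hb', Nat.mul_add, Nat.mul_one] at h
    obtain ⟨K, hK⟩ : ∃ K, k' * b' = K := ⟨_, rfl⟩
    rw [hK] at h
    have hnat : b ≤ k' * b' := by rw [hK]; omega
    exact_mod_cast hnat
  set t : ℝ := 1/(k':ℝ) with ht
  have hexp3 : Real.exp (-((b':ℝ)/(b:ℝ))) ≤ Real.exp (-t) := by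
    apply Real.exp_le_exp.mpr
    have : t ≤ (b':ℝ)/(b:ℝ) := by
      rw [ht, div_le_div_iff₀ hk0 hb0]
      linarith
    linarith
  have ht0 : 0 ≤ t := by positivity
  have ht1 : t ≤ 1 := by
    rw [ht, div_le_one hk0]; exact_mod_cast hk'
  have hcv := convexOn_exp.2 (Set.mem_univ (-1:ℝ)) (Set.mem_univ (0:ℝ))
    ht0 (show (0:ℝ) ≤ 1 - t by linarith) (show t + (1 - t) = 1 by ring)
  have hconv : Real.exp (-t) ≤ t * Real.exp (-1) + (1 - t) := by
    simp only [smul_eq_mul, mul_zero, add_zero, mul_neg_one, Real.exp_zero, mul_one] at hcv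
    exact hcv
  have hkey : t * (1 - 1/Real.exp 1) ≤ 1 - Real.exp (-t) := by
    have he : Real.exp (-1 : ℝ) = 1 / Real.exp 1 := by
      rw [Real.exp_neg, one_div]
    rw [he] at hconv
    linarith
  have hchain : OPT * (1 - 1/(b:ℝ))^b' ≤ OPT * Real.exp (-t) := by
    apply mul_le_mul_of_nonneg_left _ hOPT0
    calc (1 - 1/(b:ℝ))^b' ≤ Real.exp (-(1/(b:ℝ)))^b' := hexp1
      _ = Real.exp (-((b':ℝ)/(b:ℝ))) := hexp2
      _ ≤ Real.exp (-t) := hexp3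
  have hlast : OPT - g b' ≤ OPT * Real.exp (-t) := le_trans hfinal hchain
  have hgoal : OPT * (t * (1 - 1/Real.exp 1)) ≤ g b' := by
    calc OPT * (t * (1 - 1/Real.exp 1)) ≤ OPT * (1 - Real.exp (-t)) :=
          mul_le_mul_of_nonneg_left hkey hOPT0
      _ ≤ g b' := by linarith
  calc (1 / (k' : ℝ)) * (1 - 1 / Real.exp 1) * OPT
      = OPT * (t * (1 - 1/Real.exp 1)) := by rw [ht]; ring
    _ ≤ g b' := hgoal
end

section
/- Let p ≥ 1, let G be a simple graph on vertex set V = {1,…,d} with edge set E, let real numbers r, ε satisfy 0 < ε < r, and define the finite set D ⊆ ℝ^d as D = { 2r·e_k : k ∈ V } ∪ { −(2r − ε)·(e_k + e_l) : {k,l} ∈ E }, where e_k is the k-th standard basis vector. Then for every i ∈ V, the ℓ_p-distance from r·e_i to 2r·e_i equals r, and for every y ∈ D with y ≠ 2r·e_i, the ℓ_p-distance from r·e_i to y is strictly greater than r. In particular, 2r·e_i is the unique nearest neighbor of r·e_i in D. -/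
/-- The `ℓ_p` distance `‖x − y‖_p = (∑ k |x k − y k|^p)^(1/p)` on `ℝ^d`. -/
noncomputable def lpDist (p : ℝ) {d : ℕ} (x y : Fin d → ℝ) : ℝ :=
  (∑ k, |x k - y k| ^ p) ^ (1 / p)

/-- The `k`-th standard basis vector of `ℝ^d`. -/
def stdBasis {d : ℕ} (k : Fin d) : Fin d → ℝ := Pi.single k 1

/-- The training set of the reduction: the points `2r • e k` for each vertex `k`
and the points `−(2r − ε) • (e k + e l)` for each edge `kl` of `G`. -/
def trainSet (d : ℕ) (G : SimpleGraph (Fin d)) (r ε : ℝ) : Set (Fin d → ℝ) :=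
  {y | ∃ k : Fin d, y = (2 * r) • stdBasis k} ∪
  {y | ∃ k l : Fin d, G.Adj k l ∧ y = (-(2 * r - ε)) • (stdBasis k + stdBasis l)}

lemma lpDist_gt (p : ℝ) (hp : 1 ≤ p) {d : ℕ} (x y : Fin d → ℝ) {r : ℝ} (hr : 0 ≤ r)
    (m : Fin d) (hm : r < |x m - y m|) : r < lpDist p x y := by
  have hp0 : 0 < p := lt_of_lt_of_le one_pos hp
  have h1 : r ^ p < |x m - y m| ^ p := Real.rpow_lt_rpow hr hm hp0
  have h2 : |x m - y m| ^ p ≤ ∑ k, |x k - y k| ^ p :=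
    Finset.single_le_sum (f := fun k => |x k - y k| ^ p) (fun k _ => Real.rpow_nonneg (abs_nonneg _) p) (Finset.mem_univ m)
  have h3 : r ^ p < ∑ k, |x k - y k| ^ p := lt_of_lt_of_le h1 h2
  have h4 : (r ^ p) ^ (1/p) < (∑ k, |x k - y k| ^ p) ^ (1/p) :=
    Real.rpow_lt_rpow (Real.rpow_nonneg hr p) h3 (by positivity)
  rwa [← Real.rpow_mul hr, mul_one_div_cancel hp0.ne', Real.rpow_one] at h4

/-- In the training set `D` of the reduction, the point `2r • e i` is the
unique nearest neighbor of the target point `r • e i`: it lies at `ℓ_p`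
distance exactly `r`, and every other training point is strictly farther. -/
theorem vertex_target_unique_nearest_neighbor (p : ℝ) (hp : 1 ≤ p) (d : ℕ)
    (G : SimpleGraph (Fin d)) (r ε : ℝ) (hε : 0 < ε) (hεr : ε < r) (i : Fin d) :
    lpDist p (r • stdBasis i) ((2 * r) • stdBasis i) = r ∧
    ∀ y ∈ trainSet d G r ε, y ≠ (2 * r) • stdBasis i →
      r < lpDist p (r • stdBasis i) y := by
  have hr : 0 < r := hε.trans hεr
  have hp0 : 0 < p := lt_of_lt_of_le one_pos hp
  constructor
  · unfold lpDist
    have hsum : ∑ k, |(r • stdBasis i) k - ((2*r) • stdBasis i) k| ^ p = r ^ p := by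
      rw [Finset.sum_eq_single_of_mem i (Finset.mem_univ i)]
      · simp only [stdBasis, Pi.smul_apply, Pi.single_eq_same, smul_eq_mul]
        rw [show r * 1 - 2 * r * 1 = -r by ring, abs_neg, abs_of_pos hr]
      · intro k _ hk
        simp [stdBasis, Pi.single_eq_of_ne hk, Real.zero_rpow hp0.ne']
    rw [hsum, ← Real.rpow_mul hr.le, mul_one_div_cancel hp0.ne', Real.rpow_one]
  · rintro y (⟨k, rfl⟩ | ⟨k, l, hkl, rfl⟩) hy
    · have hk : k ≠ i := by rintro rfl; exact hy rfl
      apply lpDist_gt p hp _ _ hr.le k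
      have hc : (r • stdBasis i) k - ((2 * r) • stdBasis k) k = -(2*r) := by
        simp [stdBasis, Pi.single_eq_of_ne hk, Pi.single_eq_same]
      rw [hc, abs_neg, abs_of_pos (by linarith)]
      linarith
    · by_cases hik : i = k
      · subst hik
        have hl : l ≠ i := fun h => hkl.ne' h
        apply lpDist_gt p hp _ _ hr.le i
        have hc : (r • stdBasis i) i - ((-(2 * r - ε)) • (stdBasis i + stdBasis l)) i
            = r + (2*r - ε) := by
          simp [stdBasis, Pi.single_eq_same, Pi.single_eq_of_ne (Ne.symm hl)]
          ring
        rw [hc, abs_of_pos (by linarith)]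
        linarith
      · by_cases hil : i = l
        · subst hil
          have hk' : k ≠ i := fun h => hik h.symm
          apply lpDist_gt p hp _ _ hr.le i
          have hc : (r • stdBasis i) i - ((-(2 * r - ε)) • (stdBasis k + stdBasis i)) i
              = r + (2*r - ε) := by
            simp [stdBasis, Pi.single_eq_same, Pi.single_eq_of_ne (Ne.symm hk')]
            ring
          rw [hc, abs_of_pos (by linarith)]
          linarith
        · apply lpDist_gt p hp _ _ hr.le k
          have hlk : l ≠ k := hkl.ne'
          have hck : (r • stdBasis i) k - ((-(2 * r - ε)) • (stdBasis k + stdBasis l)) k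
              = 2*r - ε := by
            simp [stdBasis, Pi.single_eq_same, Pi.single_eq_of_ne (Ne.symm hlk),
              Pi.single_eq_of_ne (fun h : k = i => hik h.symm)]
          rw [hck, abs_of_pos (by linarith)]
          linarith
end

section
/- Let p ≥ 1, let G be a simple graph on vertex set V = {1,…,d} with edge set E, let real numbers r, ε satisfy 0 < ε < r, and define the finite set D ⊆ ℝ^d as D = { 2r·e_k : k ∈ V } ∪ { −(2r − ε)·(e_k + e_l) : {k,l} ∈ E }, where e_k is the k-th standard basis vector. Then for every edge {i,j} ∈ E, the ℓ_p-distance from −r·(e_i + e_j) to −(2r − ε)·(e_i + e_j) equals 2^{1/p}·(r − ε), and for every y ∈ D with y ≠ −(2r − ε)·(e_i + e_j), the ℓ_p-distance from −r·(e_i + e_j) to y is strictly greater than 2^{1/p}·(r − ε). In particular, −(2r − ε)·(e_i + e_j) is the unique nearest neighbor of −r·(e_i + e_j) in D. -/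
/-- Explicit single-coordinate function. -/
def sgl {d : ℕ} (a : Fin d) (α : ℝ) (k : Fin d) : ℝ := if k = a then α else 0

lemma sum_sgl {d : ℕ} {p : ℝ} (hp : p ≠ 0) (a : Fin d) (α : ℝ) :
    ∑ k, |sgl a α k| ^ p = |α| ^ p := by
  rw [Finset.sum_eq_single a]
  · simp [sgl]
  · intro b _ hb; simp [sgl, hb, Real.zero_rpow hp]
  · intro h; exact absurd (Finset.mem_univ a) h

lemma sum_abs_add {d : ℕ} {p : ℝ} (hp : p ≠ 0) {f g : Fin d → ℝ}
    (h : ∀ k, f k = 0 ∨ g k = 0) :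
    ∑ k, |f k + g k| ^ p = (∑ k, |f k| ^ p) + ∑ k, |g k| ^ p := by
  rw [← Finset.sum_add_distrib]
  refine Finset.sum_congr rfl fun k _ => ?_
  rcases h k with h | h <;> simp [h, Real.zero_rpow hp]

lemma sgl_disj {d : ℕ} {a b : Fin d} (hab : a ≠ b) (α β : ℝ) :
    ∀ k, sgl a α k = 0 ∨ sgl b β k = 0 := by
  intro k
  rcases eq_or_ne k a with rfl | hka
  · right; simp [sgl, hab]
  · left; simp [sgl, hka]

lemma sum_two {d : ℕ} {p : ℝ} (hp : p ≠ 0) {a b : Fin d} (hab : a ≠ b) (α β : ℝ) :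
    ∑ k, |sgl a α k + sgl b β k| ^ p = |α| ^ p + |β| ^ p := by
  rw [sum_abs_add hp (sgl_disj hab α β), sum_sgl hp, sum_sgl hp]

lemma sum_three {d : ℕ} {p : ℝ} (hp : p ≠ 0) {a b c : Fin d}
    (hab : a ≠ b) (hac : a ≠ c) (hbc : b ≠ c) (α β γ : ℝ) :
    ∑ k, |sgl a α k + sgl b β k + sgl c γ k| ^ p = |α| ^ p + |β| ^ p + |γ| ^ p := by
  have hdisj : ∀ k, sgl a α k + sgl b β k = 0 ∨ sgl c γ k = 0 := by
    intro k
    rcases eq_or_ne k c with rfl | hkc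
    · left; simp [sgl, hac.symm, hbc.symm]
    · right; simp [sgl, hkc]
  rw [sum_abs_add hp (f := fun k => sgl a α k + sgl b β k) hdisj, sum_two hp hab,
    sum_sgl hp]

lemma sum_four {d : ℕ} {p : ℝ} (hp : p ≠ 0) {a b c e : Fin d}
    (hab : a ≠ b) (hac : a ≠ c) (hae : a ≠ e) (hbc : b ≠ c) (hbe : b ≠ e)
    (hce : c ≠ e) (α β γ δ : ℝ) :
    ∑ k, |sgl a α k + sgl b β k + sgl c γ k + sgl e δ k| ^ p
      = |α| ^ p + |β| ^ p + |γ| ^ p + |δ| ^ p := by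
  have hdisj : ∀ k, sgl a α k + sgl b β k + sgl c γ k = 0 ∨ sgl e δ k = 0 := by
    intro k
    rcases eq_or_ne k e with rfl | hke
    · left; simp [sgl, hae.symm, hbe.symm, hce.symm]
    · right; simp [sgl, hke]
  rw [sum_abs_add hp (f := fun k => sgl a α k + sgl b β k + sgl c γ k) hdisj,
    sum_three hp hab hac hbc, sum_sgl hp]

lemma two_mul_rpow {p c : ℝ} (hp : 0 < p) (hc : 0 ≤ c) :
    (2 * c ^ p) ^ (1 / p) = 2 ^ (1 / p) * c := by
  rw [Real.mul_rpow (by norm_num) (Real.rpow_nonneg hc p), ← Real.rpow_mul hc,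
    mul_one_div_cancel hp.ne', Real.rpow_one]

lemma lp_lower {p : ℝ} (hp : 1 ≤ p) {d : ℕ} {x y : Fin d → ℝ} {c S : ℝ} (hc : 0 < c)
    (hsum : ∑ k, |x k - y k| ^ p = S) (hS : 2 * c ^ p < S) :
    2 ^ (1 / p) * c < lpDist p x y := by
  have hp0 : 0 < p := one_pos.trans_le hp
  rw [lpDist, hsum, ← two_mul_rpow hp0 hc.le]
  exact Real.rpow_lt_rpow (by positivity) hS (one_div_pos.mpr hp0)

/-- The overlap case: the other training point is an edge point sharing exactly
one endpoint `a` with the target edge. -/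
lemma overlap_case {p : ℝ} (hp : 1 ≤ p) {d : ℕ} {r ε : ℝ} (hε : 0 < ε) (hεr : ε < r)
    {a b c : Fin d} (hab : a ≠ b) (hac : a ≠ c) (hbc : b ≠ c) :
    2 ^ (1 / p) * (r - ε) <
      lpDist p ((-r) • (stdBasis a + stdBasis b)) ((-(2 * r - ε)) • (stdBasis a + stdBasis c)) := by
  have hp0 : 0 < p := one_pos.trans_le hp
  have hdiff : ∀ m, ((-r) • (stdBasis a + stdBasis b)) m
      - ((-(2 * r - ε)) • (stdBasis a + stdBasis c)) m
      = sgl a (r - ε) m + sgl b (-r) m + sgl c (2 * r - ε) m := by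
    intro m
    simp only [Pi.smul_apply, Pi.add_apply, smul_eq_mul, stdBasis, Pi.single_apply, sgl]
    by_cases h1 : m = a <;> by_cases h2 : m = b <;> by_cases h3 : m = c <;>
      simp_all <;> ring
  have hsum : ∑ k, |((-r) • (stdBasis a + stdBasis b)) k
      - ((-(2 * r - ε)) • (stdBasis a + stdBasis c)) k| ^ p
      = |r - ε| ^ p + |(-r)| ^ p + |2 * r - ε| ^ p := by
    rw [Finset.sum_congr rfl fun k _ => by rw [hdiff k]]
    exact sum_three hp0.ne' hab hac hbc _ _ _
  refine lp_lower hp (by linarith) hsum ?_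
  rw [abs_of_pos (by linarith : (0:ℝ) < r - ε), abs_neg, abs_of_pos (by linarith : (0:ℝ) < r),
    abs_of_pos (by linarith : (0:ℝ) < 2 * r - ε)]
  have h1 : (r - ε) ^ p < r ^ p := Real.rpow_lt_rpow (by linarith) (by linarith) hp0
  have h2 : (0:ℝ) < (2 * r - ε) ^ p := Real.rpow_pos_of_pos (by linarith) p
  linarith

/-- The case of a vertex point at an endpoint of the target edge. -/
lemma vertex_hit_case {p : ℝ} (hp : 1 ≤ p) {d : ℕ} {r ε : ℝ} (hε : 0 < ε) (hεr : ε < r)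
    {a b : Fin d} (hab : a ≠ b) :
    2 ^ (1 / p) * (r - ε) <
      lpDist p ((-r) • (stdBasis a + stdBasis b)) ((2 * r) • stdBasis a) := by
  have hp0 : 0 < p := one_pos.trans_le hp
  have hdiff : ∀ m, ((-r) • (stdBasis a + stdBasis b)) m - ((2 * r) • stdBasis a) m
      = sgl a (-(3 * r)) m + sgl b (-r) m := by
    intro m
    simp only [Pi.smul_apply, Pi.add_apply, smul_eq_mul, stdBasis, Pi.single_apply, sgl]
    by_cases h1 : m = a <;> by_cases h2 : m = b <;> simp_all <;> ring
  have hsum : ∑ k, |((-r) • (stdBasis a + stdBasis b)) k - ((2 * r) • stdBasis a) k| ^ p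
      = |(-(3 * r))| ^ p + |(-r)| ^ p := by
    rw [Finset.sum_congr rfl fun k _ => by rw [hdiff k]]
    exact sum_two hp0.ne' hab _ _
  refine lp_lower hp (by linarith) hsum ?_
  rw [abs_neg, abs_of_pos (by linarith : (0:ℝ) < 3 * r), abs_neg,
    abs_of_pos (by linarith : (0:ℝ) < r)]
  have h1 : (r - ε) ^ p < r ^ p := Real.rpow_lt_rpow (by linarith) (by linarith) hp0
  have h2 : (r - ε) ^ p < (3 * r) ^ p := Real.rpow_lt_rpow (by linarith) (by linarith) hp0
  linarith

/-- The case of a vertex point away from the target edge. -/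
lemma vertex_miss_case {p : ℝ} (hp : 1 ≤ p) {d : ℕ} {r ε : ℝ} (hε : 0 < ε) (hεr : ε < r)
    {a b c : Fin d} (hab : a ≠ b) (hac : a ≠ c) (hbc : b ≠ c) :
    2 ^ (1 / p) * (r - ε) <
      lpDist p ((-r) • (stdBasis a + stdBasis b)) ((2 * r) • stdBasis c) := by
  have hp0 : 0 < p := one_pos.trans_le hp
  have hdiff : ∀ m, ((-r) • (stdBasis a + stdBasis b)) m - ((2 * r) • stdBasis c) m
      = sgl a (-r) m + sgl b (-r) m + sgl c (-(2 * r)) m := by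
    intro m
    simp only [Pi.smul_apply, Pi.add_apply, smul_eq_mul, stdBasis, Pi.single_apply, sgl]
    by_cases h1 : m = a <;> by_cases h2 : m = b <;> by_cases h3 : m = c <;>
      simp_all <;> ring
  have hsum : ∑ k, |((-r) • (stdBasis a + stdBasis b)) k - ((2 * r) • stdBasis c) k| ^ p
      = |(-r)| ^ p + |(-r)| ^ p + |(-(2 * r))| ^ p := by
    rw [Finset.sum_congr rfl fun k _ => by rw [hdiff k]]
    exact sum_three hp0.ne' hab hac hbc _ _ _
  refine lp_lower hp (by linarith) hsum ?_
  rw [abs_neg, abs_of_pos (by linarith : (0:ℝ) < r), abs_neg,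
    abs_of_pos (by linarith : (0:ℝ) < 2 * r)]
  have h1 : (r - ε) ^ p < r ^ p := Real.rpow_lt_rpow (by linarith) (by linarith) hp0
  have h2 : (0:ℝ) < (2 * r) ^ p := Real.rpow_pos_of_pos (by linarith) p
  linarith

/-- The case of an edge point disjoint from the target edge. -/
lemma disjoint_case {p : ℝ} (hp : 1 ≤ p) {d : ℕ} {r ε : ℝ} (hε : 0 < ε) (hεr : ε < r)
    {a b c e : Fin d} (hab : a ≠ b) (hac : a ≠ c) (hae : a ≠ e) (hbc : b ≠ c)
    (hbe : b ≠ e) (hce : c ≠ e) :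
    2 ^ (1 / p) * (r - ε) <
      lpDist p ((-r) • (stdBasis a + stdBasis b)) ((-(2 * r - ε)) • (stdBasis c + stdBasis e)) := by
  have hp0 : 0 < p := one_pos.trans_le hp
  have hdiff : ∀ m, ((-r) • (stdBasis a + stdBasis b)) m
      - ((-(2 * r - ε)) • (stdBasis c + stdBasis e)) m
      = sgl a (-r) m + sgl b (-r) m + sgl c (2 * r - ε) m + sgl e (2 * r - ε) m := by
    intro m
    simp only [Pi.smul_apply, Pi.add_apply, smul_eq_mul, stdBasis, Pi.single_apply, sgl]
    by_cases h1 : m = a <;> by_cases h2 : m = b <;> by_cases h3 : m = c <;>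
      by_cases h4 : m = e <;> simp_all <;> ring
  have hsum : ∑ k, |((-r) • (stdBasis a + stdBasis b)) k
      - ((-(2 * r - ε)) • (stdBasis c + stdBasis e)) k| ^ p
      = |(-r)| ^ p + |(-r)| ^ p + |2 * r - ε| ^ p + |2 * r - ε| ^ p := by
    rw [Finset.sum_congr rfl fun k _ => by rw [hdiff k]]
    exact sum_four hp0.ne' hab hac hae hbc hbe hce _ _ _ _
  refine lp_lower hp (by linarith) hsum ?_
  rw [abs_neg, abs_of_pos (by linarith : (0:ℝ) < r),
    abs_of_pos (by linarith : (0:ℝ) < 2 * r - ε)]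
  have h1 : (r - ε) ^ p < r ^ p := Real.rpow_lt_rpow (by linarith) (by linarith) hp0
  have h2 : (0:ℝ) < (2 * r - ε) ^ p := Real.rpow_pos_of_pos (by linarith) p
  linarith

/-- In the training set `D` of the reduction, for each edge `ij` of `G` the
point `−(2r − ε) • (e i + e j)` is the unique nearest neighbor of the target
point `−r • (e i + e j)`: it lies at `ℓ_p` distance exactly `2^(1/p)·(r − ε)`,
and every other training point is strictly farther. -/
theorem edge_target_unique_nearest_neighbor (p : ℝ) (hp : 1 ≤ p) (d : ℕ)
    (G : SimpleGraph (Fin d)) (r ε : ℝ) (hε : 0 < ε) (hεr : ε < r)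
    (i j : Fin d) (hadj : G.Adj i j) :
    lpDist p ((-r) • (stdBasis i + stdBasis j))
        ((-(2 * r - ε)) • (stdBasis i + stdBasis j)) = (2 : ℝ) ^ (1 / p) * (r - ε) ∧
    ∀ y ∈ trainSet d G r ε, y ≠ (-(2 * r - ε)) • (stdBasis i + stdBasis j) →
      (2 : ℝ) ^ (1 / p) * (r - ε) < lpDist p ((-r) • (stdBasis i + stdBasis j)) y := by
  have hp0 : 0 < p := one_pos.trans_le hp
  have hij : i ≠ j := hadj.ne
  constructor
  · -- the distance to the edge point of the target edge
    have hdiff : ∀ m, ((-r) • (stdBasis i + stdBasis j)) m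
        - ((-(2 * r - ε)) • (stdBasis i + stdBasis j)) m
        = sgl i (r - ε) m + sgl j (r - ε) m := by
      intro m
      simp only [Pi.smul_apply, Pi.add_apply, smul_eq_mul, stdBasis, Pi.single_apply, sgl]
      by_cases h1 : m = i <;> by_cases h2 : m = j <;> simp_all <;> ring
    have hsum : ∑ k, |((-r) • (stdBasis i + stdBasis j)) k
        - ((-(2 * r - ε)) • (stdBasis i + stdBasis j)) k| ^ p
        = |r - ε| ^ p + |r - ε| ^ p := by
      rw [Finset.sum_congr rfl fun k _ => by rw [hdiff k]]
      exact sum_two hp0.ne' hij _ _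
    rw [lpDist, hsum, abs_of_pos (by linarith : (0:ℝ) < r - ε), ← two_mul ((r - ε) ^ p),
      two_mul_rpow hp0 (by linarith : (0:ℝ) ≤ r - ε)]
  · rintro y (⟨k, rfl⟩ | ⟨k, l, hkl, rfl⟩) hne
    · -- vertex points
      by_cases hki : k = i
      · subst hki; exact vertex_hit_case hp hε hεr hij
      · by_cases hkj : k = j
        · subst hkj
          have : lpDist p ((-r) • (stdBasis i + stdBasis k)) ((2 * r) • stdBasis k)
              = lpDist p ((-r) • (stdBasis k + stdBasis i)) ((2 * r) • stdBasis k) := by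
            rw [add_comm]
          rw [this]
          exact vertex_hit_case hp hε hεr (Ne.symm hij)
        · exact vertex_miss_case hp hε hεr hij (Ne.symm hki) (Ne.symm hkj)
    · -- edge points
      have hklne : k ≠ l := hkl.ne
      by_cases hki : k = i
      · subst hki
        by_cases hlj : l = j
        · subst hlj; exact absurd rfl hne
        · exact overlap_case hp hε hεr hij hklne (Ne.symm hlj)
      · by_cases hkj : k = j
        · subst hkj
          by_cases hli : l = i
          · subst hli
            exact absurd (by rw [add_comm (stdBasis k) (stdBasis l)]) hne
          · have hx : (-r) • (stdBasis i + stdBasis k) = (-r) • (stdBasis k + stdBasis i) := by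
              rw [add_comm]
            rw [hx]
            exact overlap_case hp hε hεr (Ne.symm hij) hklne (Ne.symm hli)
        · by_cases hli : l = i
          · rw [hli]
            rw [show stdBasis k + stdBasis i = stdBasis i + stdBasis k from add_comm _ _]
            exact overlap_case hp hε hεr hij (Ne.symm hki) (Ne.symm hkj)
          · by_cases hlj : l = j
            · rw [hlj]
              rw [show ((-r) • (stdBasis i + stdBasis j) : Fin d → ℝ)
                  = (-r) • (stdBasis j + stdBasis i) from by rw [add_comm],
                show stdBasis k + stdBasis j = stdBasis j + stdBasis k from add_comm _ _]
              exact overlap_case hp hε hεr (Ne.symm hij) (Ne.symm hkj) (Ne.symm hki)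
            · exact disjoint_case hp hε hεr hij (Ne.symm hki) (Ne.symm hli) (Ne.symm hkj) (Ne.symm hlj) hklne
end
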